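/- If a graph G on n vertices has spectral radius ρ(G) > n − 2, then the complement of G has at most n − 2 edges. -/

import Mathlib

open scoped Classical

/-- The adjacency matrix of a simple graph is Hermitian over `ℝ`. -/
theorem adjMatrix_isHermitian {n : ℕ} (G : SimpleGraph (Fin n)) :
    (G.adjMatrix ℝ).IsHermitian := by
  unfold Matrix.IsHermitian
  rw [Matrix.conjTranspose_eq_transpose_of_trivial]
  exact G.isSymm_adjMatrix

/-- The spectral radius of a graph: the largest eigenvalue of its adjacency matrix. -/
noncomputable def specRad {n : ℕ} (G : SimpleGraph (Fin n)) : ℝ :=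
  ⨆ i, (adjMatrix_isHermitian G).eigenvalues i

/-!
Gershgorin's theorem applied to `A²`, whose row sum at `w` is the sum of the degrees of the
neighbours of `w`, gives `ρ² ≤ ∑_{u ∼ w} deg u` for some vertex `w`. If `G` has an isolated vertex,
every degree is at most `n - 2`, so this sum is at most `(n - 2)²`, contradicting `ρ > n - 2`.
Otherwise each of the `n - 1 - deg w` vertices outside the closed neighbourhood of `w` has degree
at least one, so the sum is at most `2e - n + 1` (Hong's bound), and `(n - 2)² < 2e - n + 1`
rearranges to `e(Gᶜ) ≤ n - 2`.
-/

open Finset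

theorem Matrix.exists_le_sum_row_of_hasEigenvalue {ι : Type*} [Fintype ι] [DecidableEq ι]
    {A : Matrix ι ι ℝ} (hA : ∀ i j, 0 ≤ A i j) {μ : ℝ}
    (hμ : Module.End.HasEigenvalue (Matrix.toLin' A) μ) : ∃ i, μ ≤ ∑ j, A i j := by
  obtain ⟨i, hi⟩ := eigenvalue_mem_ball hμ
  refine ⟨i, ?_⟩
  rw [Metric.mem_closedBall, Real.dist_eq] at hi
  rw [← add_sum_erase _ _ (mem_univ i)]
  have hnorm : ∑ j ∈ univ.erase i, ‖A i j‖ = ∑ j ∈ univ.erase i, A i j :=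
    sum_congr rfl fun j _ => Real.norm_of_nonneg (hA i j)
  linarith [le_abs_self (μ - A i i)]

namespace SimpleGraph

variable {V : Type*} [Fintype V] (G : SimpleGraph V) [DecidableRel G.Adj]

theorem sum_adjMatrix_mul_self_apply {R : Type*} [NonAssocSemiring R] (v : V) :
    ∑ w, (G.adjMatrix R * G.adjMatrix R) v w = ∑ u ∈ G.neighborFinset v, (G.degree u : R) := by
  simp_rw [adjMatrix_mul_apply]
  rw [sum_comm]
  refine sum_congr rfl fun u _ => ?_
  simp [adjMatrix_apply, sum_boole, ← card_neighborFinset_eq_degree, neighborFinset_eq_filter]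

variable [DecidableEq V]

theorem degree_le_card_sub_two_of_degree_eq_zero {v : V} (hv : G.degree v = 0) (u : V) :
    G.degree u ≤ Fintype.card V - 2 := by
  rcases eq_or_ne u v with rfl | huv
  · simp [hv]
  have hsub : G.neighborFinset u ⊆ univ \ {u, v} := fun w hw => by
    rw [mem_neighborFinset] at hw
    have hwv : w ≠ v := by
      rintro rfl
      exact ((G.degree_pos_iff_exists_adj w).mpr ⟨u, hw.symm⟩).ne' hv
    simp [hw.ne.symm, hwv]
  simpa [card_sdiff_of_subset, card_pair huv] using card_le_card hsub

theorem sum_degree_neighborFinset_le_of_degree_eq_zero {v : V} (hv : G.degree v = 0) (w : V) :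
    ∑ u ∈ G.neighborFinset w, G.degree u ≤ (Fintype.card V - 2) ^ 2 :=
  calc ∑ u ∈ G.neighborFinset w, G.degree u ≤ G.degree w * (Fintype.card V - 2) :=
        sum_le_card_nsmul _ _ _ fun u _ => G.degree_le_card_sub_two_of_degree_eq_zero hv u
    _ ≤ (Fintype.card V - 2) ^ 2 := by
        rw [sq]
        exact Nat.mul_le_mul_right _ (G.degree_le_card_sub_two_of_degree_eq_zero hv w)

theorem sum_degree_neighborFinset_add_card_le (hG : ∀ v, 0 < G.degree v) (w : V) :
    ∑ u ∈ G.neighborFinset w, G.degree u + Fintype.card V ≤ 2 * #G.edgeFinset + 1 := by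
  set s := insert w (G.neighborFinset w)
  have hws : w ∉ G.neighborFinset w := by simp
  have hs : #s = G.degree w + 1 := card_insert_of_notMem hws
  have hsum : ∑ u ∈ s, G.degree u = G.degree w + ∑ u ∈ G.neighborFinset w, G.degree u :=
    sum_insert hws
  have hrest : #(univ \ s) ≤ ∑ u ∈ univ \ s, G.degree u := by
    simpa using card_nsmul_le_sum (univ \ s) (fun u => G.degree u) 1 fun u _ => hG u
  have hsplit := sum_sdiff (f := fun u => G.degree u) (subset_univ s)
  have hsV := card_le_univ s
  rw [card_univ_sdiff, hs] at hrest
  rw [← G.sum_degrees_eq_twice_card_edges]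
  omega

theorem two_mul_card_edgeFinset_add_two_mul_card_edgeFinset_compl :
    2 * #G.edgeFinset + 2 * #Gᶜ.edgeFinset = Fintype.card V * (Fintype.card V - 1) := by
  rw [← G.sum_degrees_eq_twice_card_edges, ← Gᶜ.sum_degrees_eq_twice_card_edges,
    ← sum_add_distrib, sum_congr rfl fun v _ => ?_, sum_const, card_univ, smul_eq_mul]
  rw [degree_compl]
  have := G.degree_lt_card_verts v
  omega

theorem card_edgeFinset_compl_le_of_sq_lt_sum_degree (w : V)
    (hw : (Fintype.card V - 2) ^ 2 < ∑ u ∈ G.neighborFinset w, G.degree u) :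
    #Gᶜ.edgeFinset ≤ Fintype.card V - 2 := by
  by_cases hiso : ∃ v, G.degree v = 0
  · obtain ⟨v, hv⟩ := hiso
    exact absurd (G.sum_degree_neighborFinset_le_of_degree_eq_zero hv w) hw.not_ge
  push Not at hiso
  have hHong := G.sum_degree_neighborFinset_add_card_le (fun v => Nat.pos_of_ne_zero (hiso v)) w
  have hcompl := G.two_mul_card_edgeFinset_add_two_mul_card_edgeFinset_compl
  generalize ∑ u ∈ G.neighborFinset w, G.degree u = S at hw hHong
  generalize Fintype.card V = n at hw hHong hcompl ⊢
  obtain _ | _ | m := n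
  · omega
  · omega
  · rw [show m + 1 + 1 - 2 = m by omega] at hw ⊢
    rw [Nat.add_sub_cancel] at hcompl
    nlinarith

end SimpleGraph

theorem hasEigenvalue_specRad {n : ℕ} [NeZero n] (G : SimpleGraph (Fin n)) :
    Module.End.HasEigenvalue (Matrix.toLin' (G.adjMatrix ℝ)) (specRad G) := by
  have ⟨i, hi⟩ := exists_eq_ciSup_of_finite (f := (adjMatrix_isHermitian G).eigenvalues)
  rw [specRad, ← hi, Module.End.hasEigenvalue_iff_mem_spectrum, Matrix.spectrum_toLin']
  exact (adjMatrix_isHermitian G).eigenvalues_mem_spectrum_real i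

theorem exists_sq_specRad_le_sum_degree {n : ℕ} [NeZero n] (G : SimpleGraph (Fin n)) :
    ∃ w, specRad G ^ 2 ≤ ∑ u ∈ G.neighborFinset w, (G.degree u : ℝ) := by
  have hsq := (hasEigenvalue_specRad G).pow 2
  rw [sq, Module.End.mul_eq_comp, ← Matrix.toLin'_mul] at hsq
  have hnonneg : ∀ i j, 0 ≤ (G.adjMatrix ℝ * G.adjMatrix ℝ) i j := fun i j => by
    rw [SimpleGraph.adjMatrix_mul_apply]
    exact sum_nonneg fun _ _ => by rw [SimpleGraph.adjMatrix_apply]; positivity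
  obtain ⟨w, hw⟩ := Matrix.exists_le_sum_row_of_hasEigenvalue hnonneg hsq
  exact ⟨w, hw.trans_eq (G.sum_adjMatrix_mul_self_apply w)⟩

/-- A graph on `n ≥ 2` vertices with spectral radius greater than `n - 2` has at most
`n - 2` edges missing, i.e. its complement has at most `n - 2` edges. -/
theorem stmt8 {n : ℕ} (hn : 2 ≤ n) (G : SimpleGraph (Fin n))
    (h : (n : ℝ) - 2 < specRad G) : Gᶜ.edgeSet.ncard ≤ n - 2 := by
  have : NeZero n := ⟨by omega⟩
  obtain ⟨w, hw⟩ := exists_sq_specRad_le_sum_degree G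
  have hρ : ((n - 2 : ℕ) : ℝ) ^ 2 < specRad G ^ 2 := by
    rw [Nat.cast_sub hn, Nat.cast_two]
    exact pow_lt_pow_left₀ h (by simpa using hn) two_ne_zero
  have hS : (n - 2) ^ 2 < ∑ u ∈ G.neighborFinset w, G.degree u := mod_cast hρ.trans_le hw
  rw [← SimpleGraph.coe_edgeFinset, Set.ncard_coe_finset]
  simpa using G.card_edgeFinset_compl_le_of_sq_lt_sum_degree w (by simpa using hS)
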